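/- If X is a normal topological space, then t_m(X) = t₀(X): the minitightness of X equals its functional tightness. -/

import Mathlib

open Cardinal Set

/-- The functional tightness of a space. -/
noncomputable def functionalTightness (X : Type u) [TopologicalSpace X] : Cardinal.{u} :=
  sInf {κ : Cardinal.{u} | Cardinal.aleph0 ≤ κ ∧
    ∀ f : X → ℝ,
      (∀ A : Set X, #A ≤ κ → Continuous (A.restrict f)) → Continuous f}

/-- The minitightness of a space. -/
noncomputable def minitightness (X : Type u) [TopologicalSpace X] : Cardinal.{u} :=
  sInf {κ : Cardinal.{u} | Cardinal.aleph0 ≤ κ ∧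
    ∀ f : X → ℝ,
      (∀ A : Set X, #A ≤ κ → ∃ g : X → ℝ, Continuous g ∧ ∀ x ∈ A, g x = f x) →
      Continuous f}

open Filter Topology

/-! On a normal space a κ-continuous real function is already strictly κ-continuous, so the two
cardinals are infima of the same set. Indeed, if `|A| ≤ κ` and `x ∈ closure A`, then
`|insert x A| ≤ κ` because `κ` is infinite, so `f` is continuous at `x` within `A`. A function with
this property at every point of `closure A` is continuous on `closure A` (extension by continuity
into the regular space `ℝ`), and Tietze's theorem extends `f` from the closed set `closure A`
to a continuous function on `X`. -/

section

variable {X : Type u} [TopologicalSpace X] {Y : Type v} [TopologicalSpace Y]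

theorem ContinuousOn.exists_continuous_eqOn_of_isClosed [NormalSpace X]
    [TietzeExtension.{u, v} Y] {s : Set X} {f : X → Y} (hs : IsClosed s)
    (hf : ContinuousOn f s) : ∃ g : X → Y, Continuous g ∧ EqOn g f s := by
  obtain ⟨g, hg⟩ := ContinuousMap.exists_restrict_eq hs ⟨s.domRestrict f, hf.domRestrict⟩
  exact ⟨g, g.continuous, fun x hx => congr($hg ⟨x, hx⟩)⟩

theorem continuousOn_closure_of_forall_continuousOn_insert [T3Space Y] {f : X → Y} {A : Set X}
    (h : ∀ x ∈ closure A, ContinuousOn f (insert x A)) : ContinuousOn f (closure A) := by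
  have hlim : ∀ x ∈ closure A, Tendsto f (𝓝[A] x) (𝓝 (f x)) := fun x hx =>
    (h x hx x (mem_insert x A)).mono (subset_insert x A)
  refine (continuousOn_extendFrom subset_rfl fun x hx => ⟨f x, hlim x hx⟩).congr fun x hx => ?_
  exact (extendFrom_eq hx (hlim x hx)).symm

def KappaContinuous (κ : Cardinal.{u}) (f : X → Y) : Prop :=
  ∀ A : Set X, #A ≤ κ → Continuous (A.domRestrict f)

def StrictlyKappaContinuous (κ : Cardinal.{u}) (f : X → Y) : Prop :=
  ∀ A : Set X, #A ≤ κ → ∃ g : X → Y, Continuous g ∧ ∀ x ∈ A, g x = f x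

theorem StrictlyKappaContinuous.kappaContinuous {κ : Cardinal.{u}} {f : X → Y}
    (hf : StrictlyKappaContinuous κ f) : KappaContinuous κ f := fun A hA => by
  obtain ⟨g, hg, hgf⟩ := hf A hA
  exact continuousOn_iff_continuous_domRestrict.1
    (hg.continuousOn.congr fun x hx => (hgf x hx).symm)

theorem KappaContinuous.continuousOn_closure [T3Space Y] {κ : Cardinal.{u}} {f : X → Y}
    (hκ : ℵ₀ ≤ κ) (hf : KappaContinuous κ f) {A : Set X} (hA : #A ≤ κ) :
    ContinuousOn f (closure A) := by
  refine continuousOn_closure_of_forall_continuousOn_insert fun x _ => ?_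
  have hcard : #(insert x A : Set X) ≤ κ :=
    calc #(insert x A : Set X) ≤ #A + 1 := mk_insert_le
      _ ≤ κ + 1 := add_le_add_left hA 1
      _ = κ := add_one_eq hκ
  exact continuousOn_iff_continuous_domRestrict.2 (hf _ hcard)

theorem KappaContinuous.strictlyKappaContinuous [NormalSpace X] [T3Space Y]
    [TietzeExtension.{u, v} Y] {κ : Cardinal.{u}} {f : X → Y} (hκ : ℵ₀ ≤ κ)
    (hf : KappaContinuous κ f) : StrictlyKappaContinuous κ f := fun A hA => by
  obtain ⟨g, hg, hgf⟩ :=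
    (hf.continuousOn_closure hκ hA).exists_continuous_eqOn_of_isClosed isClosed_closure
  exact ⟨g, hg, fun x hx => hgf (subset_closure hx)⟩

theorem strictlyKappaContinuous_iff_kappaContinuous [NormalSpace X] [T3Space Y]
    [TietzeExtension.{u, v} Y] {κ : Cardinal.{u}} {f : X → Y} (hκ : ℵ₀ ≤ κ) :
    StrictlyKappaContinuous κ f ↔ KappaContinuous κ f :=
  ⟨StrictlyKappaContinuous.kappaContinuous, KappaContinuous.strictlyKappaContinuous hκ⟩

end

/-- For a normal space, minitightness equals functional tightness. -/
theorem minitightness_eq_functionalTightness_of_normal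
    (X : Type u) [TopologicalSpace X] [T4Space X] :
    minitightness X = functionalTightness X := by
  unfold minitightness functionalTightness
  congr 1
  ext κ
  exact and_congr_right fun hκ => forall_congr' fun f =>
    imp_congr_left (strictlyKappaContinuous_iff_kappaContinuous hκ)
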